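/- Let f : X → 𝒢(Z,C) be a function and x₀ ∈ dom f. The following are equivalent: (a) f(x₀) is minimal in f[X], i.e. for all x ∈ X, f(x) ⊇ f(x₀) implies f(x) = f(x₀); (b) for all x ∈ X with f(x) ≠ f(x₀) there exists z* ∈ C⁻∖{0} with φ_{f,z*}(x₀) < φ_{f,z*}(x); (c) for all x with f(x) ≠ f(x₀) there exists z* ∈ C⁻∖{0} with φ_{f,z*}(x) ≠ −∞ and φ_{f,z*}(x₀) ⊖ φ_{f,z*}(x) < 0; (d) for all x with f(x) ≠ f(x₀) there exists z* ∈ C⁻∖{0} with 0 < φ_{f,z*}(x) ⊖ φ_{f,z*}(x₀); (e) for all x with f(x) ≠ f(x₀): 0 ∉ f(x) ⊖ f(x₀). -/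

import Mathlib

open Set Pointwise

noncomputable section

variable {Z : Type*} [AddCommGroup Z] [Module ℝ Z] [TopologicalSpace Z]

/-- The inf-residual `A ⊖ B = {z : B + {z} ⊆ A}`. -/
def resid (A B : Set Z) : Set Z := {z : Z | B + {z} ⊆ A}

/-- The recession cone `0⁺A`, with the convention `0⁺∅ = ∅`. -/
def recCone (A : Set Z) : Set Z := {z : Z | A.Nonempty ∧ A + {z} ⊆ A}

/-- `A ⊕ B = cl (A + B)`. -/
def oplus (A B : Set Z) : Set Z := closure (A + B)

/-- Membership in `𝒢(Z,C)`: `A = cl co (A + C)`. -/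
def IsG (C A : Set Z) : Prop := A = closure (convexHull ℝ (A + C))

/-- The set `C⁻ \ {0}` of nonzero elements of the negative dual cone. -/
def negDualNZ (C : Set Z) : Set (Z →L[ℝ] ℝ) :=
  {p : Z →L[ℝ] ℝ | (∀ c ∈ C, p c ≤ 0) ∧ p ≠ 0}

/-- `inf {-z*(z) : z ∈ A}` as an extended real. -/
def scal (p : Z →L[ℝ] ℝ) (A : Set Z) : EReal :=
  sInf ((fun z => ((-(p z) : ℝ) : EReal)) '' A)

/-- Support function `σ(z*|A) = sup {z*(z) : z ∈ A}` as an extended real. -/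
def suppF (p : Z →L[ℝ] ℝ) (A : Set Z) : EReal :=
  sSup ((fun z => ((p z : ℝ) : EReal)) '' A)

/-- Inf-residuation on the extended reals: `r ⊖ s = inf {t ∈ ℝ : r ≤ s + t}`. -/
def eresid (r s : EReal) : EReal :=
  sInf ((fun t : ℝ => (t : EReal)) '' {t : ℝ | r ≤ s + (t : EReal)})

variable {X : Type*} [AddCommGroup X] [Module ℝ X]

/-- The scalarization `φ_{f,z*}(x) = inf {-z*(z) : z ∈ f(x)}`. -/
def phi (f : X → Set Z) (p : Z →L[ℝ] ℝ) (x : X) : EReal := scal p (f x)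

/-- Convexity for set-valued functions:
`f(t x₁ + (1-t) x₂) ⊇ cl (t f(x₁) + (1-t) f(x₂))`. -/
def ConvexSV (f : X → Set Z) : Prop :=
  ∀ x₁ x₂ : X, ∀ t : ℝ, t ∈ Ioo (0:ℝ) 1 →
    closure (t • f x₁ + (1 - t) • f x₂) ⊆ f (t • x₁ + (1 - t) • x₂)

/-- The set-valued directional derivative
`f′(x,u) = ⋂_{t₀>0} cl co ⋃_{0<t<t₀} (1/t)•(f(x+tu) ⊖ f(x))`. -/
def sder (f : X → Set Z) (x u : X) : Set Z :=
  ⋂ t₀ ∈ Ioi (0:ℝ), closure (convexHull ℝ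
    (⋃ t ∈ Ioo (0:ℝ) t₀, (1 / t) • resid (f (x + t • u)) (f x)))

/-- The scalar Dini derivative `φ′_{f,z*}(x,u) = inf_{t>0} (1/t)(φ(x+tu) ⊖ φ(x))`. -/
def phiDer (f : X → Set Z) (p : Z →L[ℝ] ℝ) (x u : X) : EReal :=
  ⨅ t ∈ Ioi (0:ℝ), (((1 / t : ℝ)) : EReal) * eresid (phi f p (x + t • u)) (phi f p x)

end

/- If f(x₀) ⊈ f(x), a point of f(x₀) outside the closed convex set f(x) is strictly
separated from it by a continuous functional z*; since f(x) + C ⊆ f(x), z* is bounded above on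
a translate of C, hence z* ∈ C⁻ ∖ {0}, and it makes φ_{f,z*}(x₀) < φ_{f,z*}(x) (if f(x) = ∅, any
z* ∈ C⁻ ∖ {0} works, as φ_{f,z*}(x) = +∞ > φ_{f,z*}(x₀)). Conditions (c) and
(d) are rewritings of (b) in terms of the residuation on the extended reals, and (e) holds because
0 ∈ A ⊖ B means exactly B ⊆ A. -/

lemma eresid_le_coe {r s : EReal} {t : ℝ} (h : r ≤ s + t) : eresid r s ≤ t :=
  sInf_le ⟨t, h, rfl⟩

lemma eresid_lt_iff {r s u : EReal} : eresid r s < u ↔ ∃ t : ℝ, r ≤ s + t ∧ (t : EReal) < u := by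
  simp [eresid, sInf_lt_iff]

lemma le_eresid_iff {r s u : EReal} : u ≤ eresid r s ↔ ∀ t : ℝ, r ≤ s + t → u ≤ t := by
  simp [eresid]

lemma eresid_pos_iff {r s : EReal} : 0 < eresid r s ↔ s < r := by
  refine ⟨fun h => not_le.1 fun hrs => h.not_ge (eresid_le_coe (by simpa using hrs)), fun h => ?_⟩
  obtain ⟨a, hsa, har⟩ := EReal.lt_iff_exists_real_btwn.1 h
  obtain ⟨b, hab', hbr⟩ := EReal.lt_iff_exists_real_btwn.1 har
  have hab : a < b := EReal.coe_lt_coe_iff.1 hab'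
  refine lt_of_lt_of_le (EReal.coe_pos.2 (sub_pos.2 hab)) (le_eresid_iff.2 fun t ht => ?_)
  have : (b : EReal) < a + t := hbr.trans_le (ht.trans (add_le_add_left hsa.le _))
  exact EReal.coe_le_coe_iff.2 (by linarith [show b < a + t by exact_mod_cast this])

lemma eresid_neg_iff {r s : EReal} (hr : r ≠ ⊤) : s ≠ ⊥ ∧ eresid r s < 0 ↔ r < s := by
  constructor
  · rintro ⟨hs, hlt⟩
    obtain ⟨t, hrt, ht⟩ := eresid_lt_iff.1 hlt
    refine not_le.1 fun hsr => ?_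
    lift s to ℝ using ⟨(hsr.trans_lt hr.lt_top).ne, hs⟩
    have : (s : EReal) ≤ (s + t : ℝ) := hsr.trans hrt
    linarith [EReal.coe_le_coe_iff.1 this, EReal.coe_neg'.1 ht]
  · intro h
    obtain ⟨a, hra, has⟩ := EReal.lt_iff_exists_real_btwn.1 h
    obtain ⟨b, hab', hbs⟩ := EReal.lt_iff_exists_real_btwn.1 has
    have hab : a < b := EReal.coe_lt_coe_iff.1 hab'
    refine ⟨(bot_le.trans_lt h).ne', (eresid_le_coe (t := a - b) ?_).trans_lt
      (EReal.coe_neg'.2 (sub_neg.2 hab))⟩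
    calc r ≤ a := hra.le
      _ = b + (a - b : ℝ) := by rw [← EReal.coe_add]; ring_nf
      _ ≤ s + (a - b : ℝ) := add_le_add_left hbs.le _

lemma zero_mem_resid_iff {Z : Type*} [AddCommGroup Z] {A B : Set Z} :
    (0 : Z) ∈ resid A B ↔ B ⊆ A := by
  simp [resid]

section Scalarization

variable {Z : Type*} [AddCommGroup Z] [Module ℝ Z] [TopologicalSpace Z]

lemma scal_le_of_mem {p : Z →L[ℝ] ℝ} {A : Set Z} {z : Z} (hz : z ∈ A) :
    scal p A ≤ ((-(p z) : ℝ) : EReal) :=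
  sInf_le (mem_image_of_mem _ hz)

lemma scal_anti {p : Z →L[ℝ] ℝ} {A B : Set Z} (h : A ⊆ B) : scal p B ≤ scal p A :=
  sInf_le_sInf (image_mono h)

lemma scal_ne_top {p : Z →L[ℝ] ℝ} {A : Set Z} (hA : A.Nonempty) : scal p A ≠ ⊤ :=
  let ⟨_, hz⟩ := hA
  ne_top_of_le_ne_top (EReal.coe_ne_top _) (scal_le_of_mem hz)

@[simp]
lemma scal_empty (p : Z →L[ℝ] ℝ) : scal p (∅ : Set Z) = ⊤ := by
  simp [scal]

lemma IsG.isClosed {C A : Set Z} (h : IsG C A) : IsClosed A := by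
  rw [h]; exact isClosed_closure

lemma IsG.convex [IsTopologicalAddGroup Z] [ContinuousSMul ℝ Z] {C A : Set Z} (h : IsG C A) :
    Convex ℝ A := by
  rw [h]; exact (convex_convexHull ℝ _).closure

lemma IsG.add_subset {C A : Set Z} (h : IsG C A) : A + C ⊆ A := fun _ hw => by
  rw [h]; exact subset_closure (subset_convexHull ℝ _ hw)

lemma nonpos_on_cone_of_bddAbove {C A : Set Z} (hCcone : ∀ c ∈ C, ∀ r : ℝ, 0 < r → r • c ∈ C)
    (hAC : A + C ⊆ A) {y : Z} (hy : y ∈ A) {p : Z →L[ℝ] ℝ} {u : ℝ} (hpu : ∀ a ∈ A, p a < u) :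
    ∀ c ∈ C, p c ≤ 0 := by
  intro c hc
  by_contra! hpc
  have hmem : y + ((u - p y) / p c) • c ∈ A :=
    hAC (add_mem_add hy (hCcone c hc _ (div_pos (by linarith [hpu y hy]) hpc)))
  have := hpu _ hmem
  rw [map_add, map_smul, smul_eq_mul, div_mul_cancel₀ _ hpc.ne'] at this
  linarith

lemma exists_mem_negDualNZ_lt_scal [IsTopologicalAddGroup Z] [ContinuousSMul ℝ Z]
    [LocallyConvexSpace ℝ Z] {C A : Set Z} (hCcone : ∀ c ∈ C, ∀ r : ℝ, 0 < r → r • c ∈ C)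
    (hA : IsG C A) (hAne : A.Nonempty) {z : Z} (hz : z ∉ A) :
    ∃ p ∈ negDualNZ C, ((-(p z) : ℝ) : EReal) < scal p A := by
  obtain ⟨p, u, hpu, huz⟩ := geometric_hahn_banach_closed_point hA.convex hA.isClosed hz
  obtain ⟨y, hy⟩ := hAne
  have hp0 : p ≠ 0 := fun h => by
    have := hpu y hy
    simp only [h, zero_apply] at this huz
    linarith
  refine ⟨p, ⟨nonpos_on_cone_of_bddAbove hCcone hA.add_subset hy hpu, hp0⟩, ?_⟩
  calc ((-(p z) : ℝ) : EReal) < ((-u : ℝ) : EReal) := EReal.coe_lt_coe_iff.2 (by linarith)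
    _ ≤ scal p A := le_sInf <| forall_mem_image.2 fun a ha =>
        EReal.coe_le_coe_iff.2 (by linarith [hpu a ha])

end Scalarization

theorem minimal_iff_forall_exists_phi_lt
    {Z : Type*} [AddCommGroup Z] [Module ℝ Z] [TopologicalSpace Z]
    [IsTopologicalAddGroup Z] [ContinuousSMul ℝ Z] [LocallyConvexSpace ℝ Z]
    {X : Type*} {C : Set Z} (hCcone : ∀ c ∈ C, ∀ r : ℝ, 0 < r → r • c ∈ C)
    (hdual : (negDualNZ C).Nonempty) {f : X → Set Z} (hG : ∀ x, IsG C (f x)) {x₀ : X}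
    (hx₀ : (f x₀).Nonempty) :
    (∀ x : X, f x₀ ⊆ f x → f x = f x₀) ↔
      ∀ x : X, f x ≠ f x₀ → ∃ p ∈ negDualNZ C, phi f p x₀ < phi f p x := by
  refine ⟨fun hmin x hx => ?_, fun h x hsub => by_contra fun hne => ?_⟩
  · rcases (f x).eq_empty_or_nonempty with hempty | hne
    · obtain ⟨p, hp⟩ := hdual
      exact ⟨p, hp, by simpa [phi, hempty] using (scal_ne_top hx₀).lt_top⟩
    · obtain ⟨z, hz₀, hz⟩ := not_subset.1 fun h => hx (hmin x h)
      obtain ⟨p, hp, hlt⟩ := exists_mem_negDualNZ_lt_scal hCcone (hG x) hne hz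
      exact ⟨p, hp, (scal_le_of_mem hz₀).trans_lt hlt⟩
  · obtain ⟨p, -, hlt⟩ := h x hne
    exact (scal_anti hsub).not_gt hlt

theorem stmt_6_general
  {Z : Type*} [AddCommGroup Z] [Module ℝ Z] [TopologicalSpace Z]
  [IsTopologicalAddGroup Z] [ContinuousSMul ℝ Z] [LocallyConvexSpace ℝ Z]
  {X : Type*}
  (C : Set Z)
  (hCcone : ∀ c ∈ C, ∀ r : ℝ, 0 < r → r • c ∈ C)
  (hdual : (negDualNZ C).Nonempty)
  (f : X → Set Z) (hG : ∀ x, IsG C (f x)) (x₀ : X) (hx₀ : (f x₀).Nonempty) :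
    ((∀ x : X, f x₀ ⊆ f x → f x = f x₀) ↔
      (∀ x : X, f x ≠ f x₀ → ∃ p ∈ negDualNZ C, phi f p x₀ < phi f p x))
    ∧ ((∀ x : X, f x₀ ⊆ f x → f x = f x₀) ↔
      (∀ x : X, f x ≠ f x₀ → ∃ p ∈ negDualNZ C,
        phi f p x ≠ ⊥ ∧ eresid (phi f p x₀) (phi f p x) < 0))
    ∧ ((∀ x : X, f x₀ ⊆ f x → f x = f x₀) ↔
      (∀ x : X, f x ≠ f x₀ → ∃ p ∈ negDualNZ C,
        (0:EReal) < eresid (phi f p x) (phi f p x₀)))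
    ∧ ((∀ x : X, f x₀ ⊆ f x → f x = f x₀) ↔
      (∀ x : X, f x ≠ f x₀ → (0:Z) ∉ resid (f x) (f x₀))) := by
  have hab := minimal_iff_forall_exists_phi_lt hCcone hdual hG hx₀
  refine ⟨hab, hab.trans ?_, hab.trans ?_, ?_⟩
  · exact forall₂_congr fun x _ => exists_congr fun p => and_congr_right fun _ =>
      (eresid_neg_iff (scal_ne_top hx₀)).symm
  · exact forall₂_congr fun x _ => exists_congr fun p => and_congr_right fun _ =>
      eresid_pos_iff.symm
  · simp only [zero_mem_resid_iff]
    exact ⟨fun h x hne hsub => hne (h x hsub), fun h x hsub => by_contra fun hne => h x hne hsub⟩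

theorem stmt_6
  {Z : Type*} [AddCommGroup Z] [Module ℝ Z] [TopologicalSpace Z]
  [IsTopologicalAddGroup Z] [ContinuousSMul ℝ Z] [LocallyConvexSpace ℝ Z] [T2Space Z]
  {X : Type*} [AddCommGroup X] [Module ℝ X]
  (C : Set Z) (hCclosed : IsClosed C) (hCconv : Convex ℝ C)
  (hCcone : ∀ c ∈ C, ∀ r : ℝ, 0 < r → r • c ∈ C) (hC0 : (0:Z) ∈ C)
  (hdual : (negDualNZ C).Nonempty)
  (f : X → Set Z) (hG : ∀ x, IsG C (f x)) (x₀ : X) (hx₀ : (f x₀).Nonempty) :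
    ((∀ x : X, f x₀ ⊆ f x → f x = f x₀) ↔
      (∀ x : X, f x ≠ f x₀ → ∃ p ∈ negDualNZ C, phi f p x₀ < phi f p x))
    ∧ ((∀ x : X, f x₀ ⊆ f x → f x = f x₀) ↔
      (∀ x : X, f x ≠ f x₀ → ∃ p ∈ negDualNZ C,
        phi f p x ≠ ⊥ ∧ eresid (phi f p x₀) (phi f p x) < 0))
    ∧ ((∀ x : X, f x₀ ⊆ f x → f x = f x₀) ↔
      (∀ x : X, f x ≠ f x₀ → ∃ p ∈ negDualNZ C,
        (0:EReal) < eresid (phi f p x) (phi f p x₀)))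
    ∧ ((∀ x : X, f x₀ ⊆ f x → f x = f x₀) ↔
      (∀ x : X, f x ≠ f x₀ → (0:Z) ∉ resid (f x) (f x₀))) :=
  stmt_6_general C hCcone hdual f hG x₀ hx₀
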